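/- arXiv:2601.22940 — 2 statements merged into one kernel-verified Lean document; each statement's English description precedes it below -/
import Mathlib

section
/- Let f : ℝ₊ → ℝ be bounded, continuous, and integrable on (0,∞), and define u(t,x) = ∫₀^∞ K(t,x,y) f(y) dy. Then for every fixed t > 0 and every integer m ≥ 0, the m-th spatial derivative decays at infinity: lim_{x→∞} ∂ₓᵐ u(t,x) = 0. -/
open MeasureTheory Filter Set

/-- `Φ(r) = e^{-r} + sin r - cos r`. -/
noncomputable def Phi (r : ℝ) : ℝ := Real.exp (-r) + Real.sin r - Real.cos r

/-- The clamped biharmonic heat kernel on the half-line. -/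
noncomputable def K (t x y : ℝ) : ℝ :=
  (1 / Real.pi) * ∫ k in Set.Ioi (0:ℝ), Real.exp (-k ^ 4 * t) * Phi (k * x) * Phi (k * y)

/-! Fubini gives `u(t, x) = ∫₀^∞ g(k) Φ(kx) dk` with `g(k) = π⁻¹ e^{-k⁴t} ∫₀^∞ Φ(ky) f(y) dy`,
and `g` decays faster than any power of `k`, so one may differentiate under the integral:
`∂ₓᵐ u(t, x) = ∫₀^∞ kᵐ g(k) Φ⁽ᵐ⁾(kx) dk`. As
`Φ⁽ᵐ⁾(r) = (-1)ᵐ e^{-r} + sin (r + mπ/2) - cos (r + mπ/2)`, the exponential part of this integral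
vanishes as `x → ∞` by dominated convergence and the oscillating part by the Riemann–Lebesgue
lemma. -/

open Real Topology

lemma contDiff_Phi : ContDiff ℝ ⊤ Phi := by
  unfold Phi; fun_prop

lemma iteratedDeriv_Phi (m : ℕ) :
    iteratedDeriv m Phi =
      fun r => (-1) ^ m * exp (-r) + sin (r + m * (π / 2)) - cos (r + m * (π / 2)) := by
  induction m with
  | zero => funext r; simp [Phi]
  | succ n ih =>
    funext r
    rw [iteratedDeriv_succ, ih]
    have hshift : r + ((n + 1 : ℕ) : ℝ) * (π / 2) = r + n * (π / 2) + π / 2 := by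
      push_cast; ring
    rw [hshift, sin_add_pi_div_two, cos_add_pi_div_two]
    refine HasDerivAt.deriv ?_
    refine ((((hasDerivAt_neg r).exp.const_mul ((-1 : ℝ) ^ n)).add
      ((hasDerivAt_id r).add_const (n * (π / 2))).sin).sub
      ((hasDerivAt_id r).add_const (n * (π / 2))).cos).congr_deriv ?_
    simp only [id]
    ring

@[fun_prop]
lemma continuous_Phi : Continuous Phi :=
  contDiff_Phi.continuous

lemma hasDerivAt_iteratedDeriv_Phi (n : ℕ) (r : ℝ) :
    HasDerivAt (iteratedDeriv n Phi) (iteratedDeriv (n + 1) Phi r) r := by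
  rw [iteratedDeriv_succ]
  exact ((contDiff_Phi.differentiable_iteratedDeriv n (WithTop.coe_lt_top _)) r).hasDerivAt

lemma continuous_iteratedDeriv_Phi (n : ℕ) : Continuous (iteratedDeriv n Phi) :=
  contDiff_Phi.continuous_iteratedDeriv n (by simp)

lemma abs_iteratedDeriv_Phi_le (n : ℕ) {r : ℝ} (hr : 0 ≤ r) : |iteratedDeriv n Phi r| ≤ 3 := by
  rw [iteratedDeriv_Phi]
  have he : |(-1 : ℝ) ^ n * exp (-r)| ≤ 1 := by
    rw [abs_mul, abs_pow, abs_neg, abs_one, one_pow, one_mul, abs_exp, exp_le_one_iff]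
    linarith
  have := abs_sin_le_one (r + n * (π / 2))
  have := abs_cos_le_one (r + n * (π / 2))
  calc _ ≤ |(-1 : ℝ) ^ n * exp (-r)| + |sin (r + n * (π / 2))| + |cos (r + n * (π / 2))| :=
        (abs_sub _ _).trans (add_le_add_left (abs_add_le _ _) _)
    _ ≤ 3 := by linarith

lemma abs_Phi_le {r : ℝ} (hr : 0 ≤ r) : |Phi r| ≤ 3 := by
  simpa using abs_iteratedDeriv_Phi_le 0 hr

lemma tendsto_setIntegral_mul_cos_atTop {h : ℝ → ℝ} {s : Set ℝ} (hs : MeasurableSet s)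
    (hh : IntegrableOn h s) (c : ℝ) :
    Tendsto (fun x => ∫ v in s, h v * cos (v * x + c)) atTop (𝓝 0) := by
  set F : ℝ → ℂ := fun v => Complex.exp (c * Complex.I) * ((s.indicator h v : ℝ) : ℂ)
  have hscale : Tendsto (fun x : ℝ => -x / (2 * π)) atTop (cocompact ℝ) :=
    (tendsto_neg_atTop_atBot.atBot_div_const (by positivity)).mono_right
      (by rw [cocompact_eq_atBot_atTop]; exact le_sup_left)
  have hRL := (Complex.continuous_re.tendsto 0).comp
    ((Real.tendsto_integral_exp_smul_cocompact F).comp hscale)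
  rw [Complex.zero_re] at hRL
  refine hRL.congr fun x => ?_
  have hchar : ∀ v, Real.fourierChar (-(v * (-x / (2 * π)))) • F v
      = Complex.exp ((v * x + c : ℝ) * Complex.I) * ((s.indicator h v : ℝ) : ℂ) := by
    intro v
    rw [Circle.smul_def, Real.fourierChar_apply, smul_eq_mul, ← mul_assoc, ← Complex.exp_add]
    congr 3
    field_simp
    push_cast; ring
  have hint : Integrable (fun v => Complex.exp ((v * x + c : ℝ) * Complex.I) *
      ((s.indicator h v : ℝ) : ℂ)) := by
    refine ((integrable_indicator_iff hs).mpr hh).ofReal.bdd_mul (c := 1) (by fun_prop) ?_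
    exact Eventually.of_forall fun v => by rw [Complex.norm_exp_ofReal_mul_I]
  simp only [Function.comp_apply, hchar]
  rw [← integral_indicator hs, ← RCLike.re_eq_complex_re, ← integral_re hint]
  refine integral_congr_ae (Eventually.of_forall fun v => ?_)
  by_cases hv : v ∈ s
  · simp only [indicator_of_mem hv, RCLike.re_to_complex]
    rw [Complex.re_mul_ofReal, Complex.exp_ofReal_mul_I_re, mul_comm]
  · simp [hv]

lemma norm_exp_neg_mul_le_one {k x : ℝ} (hk : 0 ≤ k) (hx : 0 ≤ x) : ‖exp (-(k * x))‖ ≤ 1 := by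
  rw [norm_of_nonneg (exp_pos _).le, exp_le_one_iff, neg_nonpos]
  exact mul_nonneg hk hx

lemma tendsto_setIntegral_mul_exp_neg_mul_atTop {h : ℝ → ℝ} (hh : IntegrableOn h (Ioi 0)) :
    Tendsto (fun x => ∫ k in Ioi 0, h k * exp (-(k * x))) atTop (𝓝 0) := by
  have hlim := tendsto_integral_filter_of_dominated_convergence (fun k => ‖h k‖)
    (l := atTop) (F := fun x k => h k * exp (-(k * x))) (f := fun _ => 0)
    (Eventually.of_forall fun x => hh.aestronglyMeasurable.mul (by fun_prop)) ?_ hh.norm ?_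
  · simpa using hlim
  · filter_upwards [eventually_ge_atTop 0] with x hx
    filter_upwards [ae_restrict_mem measurableSet_Ioi] with k hk
    rw [norm_mul]
    exact mul_le_of_le_one_right (norm_nonneg _) (norm_exp_neg_mul_le_one (le_of_lt hk) hx)
  · filter_upwards [ae_restrict_mem measurableSet_Ioi] with k hk
    simpa using (tendsto_exp_atBot.comp (tendsto_neg_atTop_atBot.comp
      (tendsto_id.const_mul_atTop hk))).const_mul (h k)

lemma tendsto_setIntegral_mul_iteratedDeriv_Phi_atTop {h : ℝ → ℝ} (hh : IntegrableOn h (Ioi 0))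
    (m : ℕ) : Tendsto (fun x => ∫ k in Ioi 0, h k * iteratedDeriv m Phi (k * x)) atTop (𝓝 0) := by
  set c : ℝ := m * (π / 2)
  have hsplit : ∀ x, 0 ≤ x → ∫ k in Ioi 0, h k * iteratedDeriv m Phi (k * x) =
      (-1) ^ m * (∫ k in Ioi 0, h k * exp (-(k * x)))
        + (∫ k in Ioi 0, h k * cos (k * x + (c - π / 2)))
        - ∫ k in Ioi 0, h k * cos (k * x + c) := by
    intro x hx
    have hcos : ∀ c', IntegrableOn (fun k => h k * cos (k * x + c')) (Ioi 0) := fun c' =>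
      hh.mul_bdd (c := 1) (by fun_prop)
        (Eventually.of_forall fun k => by simpa using abs_cos_le_one _)
    have hexp : IntegrableOn (fun k => h k * exp (-(k * x))) (Ioi 0) :=
      hh.mul_bdd (c := 1) (by fun_prop) (by
        filter_upwards [ae_restrict_mem measurableSet_Ioi] with k hk
        exact norm_exp_neg_mul_le_one (le_of_lt hk) hx)
    rw [← integral_const_mul, ← integral_add (hexp.const_mul _) (hcos _),
      ← integral_sub _ (hcos _)]
    · refine integral_congr_ae (Eventually.of_forall fun k => ?_)
      simp only [iteratedDeriv_Phi]
      rw [← add_sub_assoc, cos_sub_pi_div_two]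
      ring
    · exact (hexp.const_mul _).add (hcos _)
  have hlim := (((tendsto_setIntegral_mul_exp_neg_mul_atTop hh).const_mul ((-1 : ℝ) ^ m)).add
    (tendsto_setIntegral_mul_cos_atTop measurableSet_Ioi hh (c - π / 2))).sub
    (tendsto_setIntegral_mul_cos_atTop measurableSet_Ioi hh c)
  simp only [mul_zero, add_zero, sub_zero] at hlim
  exact hlim.congr' (by filter_upwards [eventually_ge_atTop 0] with x hx using (hsplit x hx).symm)

lemma integrableOn_mul_iteratedDeriv_Phi {h : ℝ → ℝ} (hh : IntegrableOn h (Ioi 0)) (n : ℕ)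
    {x : ℝ} (hx : 0 ≤ x) : IntegrableOn (fun k => h k * iteratedDeriv n Phi (k * x)) (Ioi 0) :=
  hh.mul_bdd (c := 3) ((continuous_iteratedDeriv_Phi n).comp_aestronglyMeasurable (by fun_prop)) (by
    filter_upwards [ae_restrict_mem measurableSet_Ioi] with k hk
    exact abs_iteratedDeriv_Phi_le n (mul_nonneg (le_of_lt hk) hx))

lemma hasDerivAt_setIntegral_mul_iteratedDeriv_Phi {g : ℝ → ℝ} {n : ℕ}
    (hn : IntegrableOn (fun k => k ^ n * g k) (Ioi 0))
    (hn1 : IntegrableOn (fun k => k ^ (n + 1) * g k) (Ioi 0)) {x : ℝ} (hx : 0 < x) :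
    HasDerivAt (fun z => ∫ k in Ioi 0, k ^ n * g k * iteratedDeriv n Phi (k * z))
      (∫ k in Ioi 0, k ^ (n + 1) * g k * iteratedDeriv (n + 1) Phi (k * x)) x := by
  refine (hasDerivAt_integral_of_dominated_loc_of_deriv_le (μ := volume.restrict (Ioi 0))
    (bound := fun k => ‖k ^ (n + 1) * g k‖ * 3)
    (F := fun z k => k ^ n * g k * iteratedDeriv n Phi (k * z))
    (F' := fun z k => k ^ (n + 1) * g k * iteratedDeriv (n + 1) Phi (k * z))
    (Ioi_mem_nhds hx) ?_ (integrableOn_mul_iteratedDeriv_Phi hn n hx.le)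
    (integrableOn_mul_iteratedDeriv_Phi hn1 (n + 1) hx.le).aestronglyMeasurable ?_
    (hn1.norm.mul_const 3) ?_).2
  · filter_upwards [Ioi_mem_nhds hx] with z hz
    exact (integrableOn_mul_iteratedDeriv_Phi hn n (le_of_lt hz)).aestronglyMeasurable
  · filter_upwards [ae_restrict_mem measurableSet_Ioi] with k hk z hz
    rw [norm_mul]
    exact mul_le_mul_of_nonneg_left
      (abs_iteratedDeriv_Phi_le _ (mul_nonneg (le_of_lt hk) (le_of_lt hz))) (norm_nonneg _)
  · refine Eventually.of_forall fun k z _ => ?_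
    refine (((hasDerivAt_iteratedDeriv_Phi n (k * z)).comp z
      ((hasDerivAt_id z).const_mul k)).const_mul (k ^ n * g k)).congr_deriv ?_
    ring

lemma iteratedDeriv_setIntegral_mul_Phi {g : ℝ → ℝ}
    (hg : ∀ n : ℕ, IntegrableOn (fun k => k ^ n * g k) (Ioi 0)) (m : ℕ) {x : ℝ} (hx : 0 < x) :
    iteratedDeriv m (fun z => ∫ k in Ioi 0, g k * Phi (k * z)) x =
      ∫ k in Ioi 0, k ^ m * g k * iteratedDeriv m Phi (k * x) := by
  induction m generalizing x with
  | zero => simp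
  | succ n ih =>
    have hev : iteratedDeriv n (fun z => ∫ k in Ioi 0, g k * Phi (k * z)) =ᶠ[𝓝 x]
        fun z => ∫ k in Ioi 0, k ^ n * g k * iteratedDeriv n Phi (k * z) := by
      filter_upwards [Ioi_mem_nhds hx] with z hz using ih hz
    rw [iteratedDeriv_succ, hev.deriv_eq]
    exact (hasDerivAt_setIntegral_mul_iteratedDeriv_Phi (hg n) (hg (n + 1)) hx).deriv

noncomputable def phiTransform (f : ℝ → ℝ) (k : ℝ) : ℝ := ∫ y in Ioi 0, Phi (k * y) * f y

section phiTransform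

variable {f : ℝ → ℝ}

lemma norm_Phi_mul_le {k y : ℝ} (hk : 0 ≤ k) (hy : 0 ≤ y) : ‖Phi (k * y) * f y‖ ≤ 3 * ‖f y‖ := by
  rw [norm_mul]
  exact mul_le_mul_of_nonneg_right (abs_Phi_le (mul_nonneg hk hy)) (norm_nonneg _)

lemma norm_phiTransform_le (hf : IntegrableOn f (Ioi 0)) {k : ℝ} (hk : 0 ≤ k) :
    ‖phiTransform f k‖ ≤ 3 * ∫ y in Ioi 0, ‖f y‖ := by
  rw [← integral_const_mul]
  refine norm_integral_le_of_norm_le (hf.norm.const_mul 3) ?_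
  filter_upwards [ae_restrict_mem measurableSet_Ioi] with y hy
  exact norm_Phi_mul_le hk (le_of_lt hy)

lemma continuousOn_phiTransform (hf : IntegrableOn f (Ioi 0)) :
    ContinuousOn (phiTransform f) (Ici 0) := by
  refine continuousOn_of_dominated (bound := fun y => 3 * ‖f y‖)
    (fun k _ => (by fun_prop : Continuous fun y => Phi (k * y)).aestronglyMeasurable.mul
      hf.aestronglyMeasurable)
    (fun k hk => ?_) (hf.norm.const_mul 3) (Eventually.of_forall fun y => by fun_prop)
  filter_upwards [ae_restrict_mem measurableSet_Ioi] with y hy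
  exact norm_Phi_mul_le hk (le_of_lt hy)

lemma integrableOn_pow_mul_exp_neg_pow_four_mul {t : ℝ} (ht : 0 < t) (n : ℕ) :
    IntegrableOn (fun k : ℝ => k ^ n * exp (-k ^ 4 * t)) (Ioi 0) := by
  refine (integrableOn_rpow_mul_exp_neg_mul_rpow (p := 4) (s := n)
    (by linarith [n.cast_nonneg (α := ℝ)]) (by norm_num) ht).congr_fun (fun k _ => ?_)
    measurableSet_Ioi
  simp only [rpow_natCast, show (4 : ℝ) = (4 : ℕ) from by norm_num]
  ring_nf

lemma integrableOn_pow_mul_heat_phiTransform (hf : IntegrableOn f (Ioi 0)) {t : ℝ} (ht : 0 < t)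
    (n : ℕ) :
    IntegrableOn (fun k => k ^ n * (1 / π * exp (-k ^ 4 * t) * phiTransform f k)) (Ioi 0) := by
  refine IntegrableOn.congr_fun (((integrableOn_pow_mul_exp_neg_pow_four_mul ht n).mul_bdd
    (c := 3 * ∫ y in Ioi 0, ‖f y‖) ((continuousOn_phiTransform hf).mono Ioi_subset_Ici_self
      |>.aestronglyMeasurable measurableSet_Ioi) ?_).const_mul (1 / π))
    (fun k _ => by ring) measurableSet_Ioi
  filter_upwards [ae_restrict_mem measurableSet_Ioi] with k hk
  exact norm_phiTransform_le hf (le_of_lt hk)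

lemma setIntegral_K_mul_eq (hf : IntegrableOn f (Ioi 0)) {t x : ℝ} (ht : 0 < t) (hx : 0 ≤ x) :
    ∫ y in Ioi 0, K t x y * f y =
      ∫ k in Ioi 0, 1 / π * exp (-k ^ 4 * t) * phiTransform f k * Phi (k * x) := by
  set μ := volume.restrict (Ioi (0 : ℝ))
  have hpos : ∀ᵐ p : ℝ × ℝ ∂μ.prod μ, 0 < p.1 ∧ 0 < p.2 := by
    rw [Measure.prod_restrict]
    filter_upwards [ae_restrict_mem (measurableSet_Ioi.prod measurableSet_Ioi)] with p hp using hp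
  have hint : Integrable (fun p : ℝ × ℝ =>
      f p.1 * exp (-p.2 ^ 4 * t) * (Phi (p.2 * x) * Phi (p.2 * p.1))) (μ.prod μ) := by
    have hexp := integrableOn_pow_mul_exp_neg_pow_four_mul ht 0
    simp only [pow_zero, one_mul] at hexp
    refine (hf.mul_prod hexp).mul_bdd (c := 3 * 3) (by fun_prop) ?_
    filter_upwards [hpos] with p hp
    rw [norm_mul]
    exact mul_le_mul (abs_Phi_le (mul_nonneg hp.2.le hx))
      (abs_Phi_le (mul_nonneg hp.2.le hp.1.le)) (norm_nonneg _) (by norm_num)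
  calc ∫ y in Ioi 0, K t x y * f y
      = ∫ y in Ioi 0, ∫ k in Ioi 0,
          1 / π * (f y * exp (-k ^ 4 * t) * (Phi (k * x) * Phi (k * y))) := by
        refine integral_congr_ae (Eventually.of_forall fun y => ?_)
        simp only [K, ← integral_const_mul, ← integral_mul_const]
        congr 1 with k
        ring
    _ = ∫ k in Ioi 0, ∫ y in Ioi 0,
          1 / π * (f y * exp (-k ^ 4 * t) * (Phi (k * x) * Phi (k * y))) :=
        integral_integral_swap (hint.const_mul _)
    _ = ∫ k in Ioi 0, 1 / π * exp (-k ^ 4 * t) * phiTransform f k * Phi (k * x) := by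
        refine integral_congr_ae (Eventually.of_forall fun k => ?_)
        simp only [phiTransform, ← integral_const_mul, ← integral_mul_const]
        congr 1 with y
        ring

end phiTransform

theorem stmt3_general (f : ℝ → ℝ)
    (hf_int : IntegrableOn f (Set.Ioi 0))
    (u : ℝ → ℝ → ℝ)
    (hu : ∀ t x, u t x = ∫ y in Set.Ioi (0:ℝ), K t x y * f y) :
    ∀ t > (0:ℝ), ∀ m : ℕ,
      Tendsto (fun x => iteratedDeriv m (fun z => u t z) x) atTop (nhds 0) := by
  intro t ht m
  set g : ℝ → ℝ := fun k => 1 / π * exp (-k ^ 4 * t) * phiTransform f k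
  have hg : ∀ n : ℕ, IntegrableOn (fun k => k ^ n * g k) (Ioi 0) :=
    integrableOn_pow_mul_heat_phiTransform hf_int ht
  have hu_eq : ∀ x > 0, iteratedDeriv m (fun z => u t z) x =
      ∫ k in Ioi 0, k ^ m * g k * iteratedDeriv m Phi (k * x) := by
    intro x hx
    rw [← iteratedDeriv_setIntegral_mul_Phi hg m hx]
    refine Filter.EventuallyEq.iteratedDeriv_eq m ?_
    filter_upwards [Ioi_mem_nhds hx] with z hz
    rw [hu, setIntegral_K_mul_eq hf_int ht (le_of_lt hz)]
  refine (tendsto_setIntegral_mul_iteratedDeriv_Phi_atTop (hg m) m).congr' ?_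
  filter_upwards [eventually_gt_atTop 0] with x hx using (hu_eq x hx).symm

/-- every spatial derivative of `u(t,x) = ∫₀^∞ K(t,x,y) f(y) dy`
decays at infinity for each fixed `t > 0`. -/
theorem stmt3 (f : ℝ → ℝ)
    (hf_cont : ContinuousOn f (Set.Ici 0))
    (hf_bdd : ∃ M, ∀ x ≥ (0:ℝ), |f x| ≤ M)
    (hf_int : IntegrableOn f (Set.Ioi 0))
    (u : ℝ → ℝ → ℝ)
    (hu : ∀ t x, u t x = ∫ y in Set.Ioi (0:ℝ), K t x y * f y) :
    ∀ t > (0:ℝ), ∀ m : ℕ,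
      Tendsto (fun x => iteratedDeriv m (fun z => u t z) x) atTop (nhds 0) :=
  stmt3_general f hf_int u hu
end

section
/- For each integer m ≥ 0 there exists a constant C'_m > 0, independent of t, x, and y, such that for all t > 0 and x, y ≥ 0, |∂ₓᵐ K(t,x,y)| ≤ C'_m t^{−(m+1)/4}. -/
open MeasureTheory Filter Set

/-!
Differentiating under the integral sign gives
`∂ₓᵐ K(t,x,y) = (1/π) ∫₀^∞ e^{-k⁴t} kᵐ Φ⁽ᵐ⁾(kx) Φ(ky) dk` with
`Φ⁽ᵐ⁾(r) = (-1)ᵐ e^{-r} + sin (r + mπ/2) - cos (r + mπ/2)`, which is bounded by `3` for `r ≥ 0`.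
Hence `|∂ₓᵐ K| ≤ (9/π) ∫₀^∞ kᵐ e^{-tk⁴} dk = (9/4π) Γ((m+1)/4) t^{-(m+1)/4}`.
-/

open Real

noncomputable def phiDeriv (n : ℕ) (r : ℝ) : ℝ :=
  (-1) ^ n * exp (-r) + sin (r + n * (π / 2)) - cos (r + n * (π / 2))

lemma phiDeriv_zero : phiDeriv 0 = Phi := by
  ext r; simp [phiDeriv, Phi]

lemma continuous_phiDeriv (n : ℕ) : Continuous (phiDeriv n) := by
  unfold phiDeriv; fun_prop

lemma hasDerivAt_phiDeriv (n : ℕ) (r : ℝ) : HasDerivAt (phiDeriv n) (phiDeriv (n + 1) r) r := by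
  have h := ((((hasDerivAt_neg r).exp).const_mul ((-1 : ℝ) ^ n)).add
    ((hasDerivAt_id r).add_const (n * (π / 2))).sin).sub
      ((hasDerivAt_id r).add_const (n * (π / 2))).cos
  refine h.congr_deriv ?_
  rw [phiDeriv, Nat.cast_succ, add_one_mul, ← add_assoc, sin_add_pi_div_two, cos_add_pi_div_two,
    pow_succ, id]
  ring

lemma abs_phiDeriv_le (n : ℕ) (r : ℝ) : |phiDeriv n r| ≤ exp (-r) + 2 := by
  have he : |(-1 : ℝ) ^ n * exp (-r)| = exp (-r) := by simp [abs_mul, abs_pow]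
  calc |phiDeriv n r|
      ≤ |(-1 : ℝ) ^ n * exp (-r)| + |sin (r + n * (π / 2))| + |cos (r + n * (π / 2))| :=
        (abs_sub _ _).trans (by gcongr; exact abs_add_le _ _)
    _ ≤ exp (-r) + 1 + 1 := by
        rw [he]; gcongr
        exacts [abs_sin_le_one _, abs_cos_le_one _]
    _ = exp (-r) + 2 := by ring

lemma abs_phiDeriv_le_three_mul_exp (n : ℕ) {r c : ℝ} (hc : 0 ≤ c) (hr : -c ≤ r) :
    |phiDeriv n r| ≤ 3 * exp c := by
  have h1 : exp (-r) ≤ exp c := exp_le_exp.mpr (by linarith)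
  have h2 : 1 ≤ exp c := one_le_exp hc
  linarith [abs_phiDeriv_le n r]

lemma integral_pow_mul_exp_neg_mul_pow_four (m : ℕ) {a : ℝ} (ha : 0 < a) :
    ∫ k in Ioi (0 : ℝ), k ^ m * exp (-a * k ^ 4) =
      a ^ (-((m : ℝ) + 1) / 4) * (1 / 4) * Gamma (((m : ℝ) + 1) / 4) := by
  simpa [rpow_natCast, rpow_ofNat] using
    integral_rpow_mul_exp_neg_mul_rpow (p := 4) (by norm_num)
      (neg_one_lt_zero.trans_le m.cast_nonneg) ha

lemma integrableOn_pow_mul_exp_neg_mul_pow_four (m : ℕ) {a : ℝ} (ha : 0 < a) :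
    IntegrableOn (fun k : ℝ => k ^ m * exp (-a * k ^ 4)) (Ioi 0) := by
  simpa [rpow_natCast, rpow_ofNat] using
    integrableOn_rpow_mul_exp_neg_mul_rpow (p := 4) (neg_one_lt_zero.trans_le m.cast_nonneg)
      (by norm_num) ha

lemma mul_le_half_mul_pow_four_add {a : ℝ} (ha : 0 < a) (b k : ℝ) :
    b * k ≤ a / 2 * k ^ 4 + (b ^ 2 / a + a / 8) := by
  have h1 : b * k ≤ b ^ 2 / a + a / 4 * k ^ 2 := by
    rw [div_add' _ _ _ ha.ne', le_div_iff₀ ha]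
    nlinarith [sq_nonneg (b - a / 2 * k)]
  nlinarith [mul_nonneg ha.le (sq_nonneg (k ^ 2 - 1)), mul_nonneg ha.le (sq_nonneg (k ^ 2))]

lemma integrableOn_pow_mul_exp_neg_mul_pow_four_add_mul (p : ℕ) {a : ℝ} (ha : 0 < a) (b : ℝ) :
    IntegrableOn (fun k : ℝ => k ^ p * exp (-a * k ^ 4 + b * k)) (Ioi 0) := by
  refine ((integrableOn_pow_mul_exp_neg_mul_pow_four p (half_pos ha)).const_mul
    (exp (b ^ 2 / a + a / 8))).mono' (by fun_prop) ?_
  filter_upwards [ae_restrict_mem measurableSet_Ioi] with k (hk : 0 < k)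
  rw [norm_mul, norm_pow, Real.norm_of_nonneg hk.le, Real.norm_of_nonneg (exp_nonneg _),
    mul_left_comm, ← exp_add]
  gcongr _ * exp ?_
  linarith [mul_le_half_mul_pow_four_add ha b k]

noncomputable def kernelDerivIntegrand (t y : ℝ) (n : ℕ) (x k : ℝ) : ℝ :=
  exp (-k ^ 4 * t) * (k ^ n * phiDeriv n (k * x)) * Phi (k * y)

noncomputable def kernelDeriv (t y : ℝ) (n : ℕ) (x : ℝ) : ℝ :=
  (1 / π) * ∫ k in Ioi 0, kernelDerivIntegrand t y n x k

lemma kernelDeriv_zero (t y : ℝ) : kernelDeriv t y 0 = fun x => K t x y := by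
  ext x; simp [kernelDeriv, kernelDerivIntegrand, K, phiDeriv_zero]

lemma continuous_kernelDerivIntegrand (t y : ℝ) (n : ℕ) (x : ℝ) :
    Continuous (kernelDerivIntegrand t y n x) := by
  have := continuous_phiDeriv n
  unfold kernelDerivIntegrand Phi
  fun_prop

lemma hasDerivAt_kernelDerivIntegrand (t y : ℝ) (n : ℕ) (k x : ℝ) :
    HasDerivAt (fun x => kernelDerivIntegrand t y n x k)
      (kernelDerivIntegrand t y (n + 1) x k) x := by
  have h := (((hasDerivAt_phiDeriv n (k * x)).comp x ((hasDerivAt_id x).const_mul k)).const_mul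
    (exp (-k ^ 4 * t) * k ^ n)).mul_const (Phi (k * y))
  refine (h.congr_deriv ?_).congr_of_eventuallyEq (.of_forall fun x => ?_)
  · simp only [kernelDerivIntegrand, mul_one]; ring
  · simp only [kernelDerivIntegrand, Function.comp_apply]; ring

lemma abs_kernelDerivIntegrand_le {y : ℝ} (hy : 0 ≤ y) (t : ℝ) (n : ℕ) {x c k : ℝ} (hc : 0 ≤ c)
    (hx : -c ≤ x) (hk : 0 < k) :
    |kernelDerivIntegrand t y n x k| ≤ 9 * (k ^ n * exp (-t * k ^ 4 + c * k)) := by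
  have hPhi : |Phi (k * y)| ≤ 3 := by
    simpa [phiDeriv_zero] using
      abs_phiDeriv_le_three_mul_exp 0 le_rfl (by rw [neg_zero]; positivity)
  have hPhiDeriv : |phiDeriv n (k * x)| ≤ 3 * exp (c * k) :=
    abs_phiDeriv_le_three_mul_exp n (by positivity) (by nlinarith)
  calc |kernelDerivIntegrand t y n x k|
      = exp (-k ^ 4 * t) * k ^ n * |phiDeriv n (k * x)| * |Phi (k * y)| := by
        simp only [kernelDerivIntegrand, abs_mul, abs_exp, abs_pow, abs_of_pos hk, mul_assoc]
    _ ≤ exp (-k ^ 4 * t) * k ^ n * (3 * exp (c * k)) * 3 := by gcongr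
    _ = 9 * (k ^ n * exp (-t * k ^ 4 + c * k)) := by rw [exp_add]; ring_nf

lemma integrableOn_kernelDerivIntegrand {t : ℝ} (ht : 0 < t) {y : ℝ} (hy : 0 ≤ y) (n : ℕ)
    (x : ℝ) : IntegrableOn (kernelDerivIntegrand t y n x) (Ioi 0) := by
  refine ((integrableOn_pow_mul_exp_neg_mul_pow_four_add_mul n ht |x|).const_mul 9).mono'
    (continuous_kernelDerivIntegrand t y n x).aestronglyMeasurable ?_
  filter_upwards [ae_restrict_mem measurableSet_Ioi] with k hk
  exact abs_kernelDerivIntegrand_le hy t n (abs_nonneg x) (neg_abs_le x) hk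

lemma hasDerivAt_kernelDeriv {t : ℝ} (ht : 0 < t) {y : ℝ} (hy : 0 ≤ y) (n : ℕ) (x : ℝ) :
    HasDerivAt (kernelDeriv t y n) (kernelDeriv t y (n + 1) x) x := by
  -- Near `x` the point `z` may be negative, where `Φ⁽ⁿ⁾(kz)` grows like `e^{k(|x|+1)}`;
  -- the factor `e^{-tk⁴}` still dominates.
  have hball : ∀ z ∈ Metric.ball x 1, -(|x| + 1) ≤ z := fun z hz => by
    have := (abs_lt.mp (Real.dist_eq z x ▸ Metric.mem_ball.mp hz)).1
    linarith [neg_abs_le x]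
  refine (hasDerivAt_integral_of_dominated_loc_of_deriv_le (Metric.ball_mem_nhds x one_pos)
    (.of_forall fun z => (continuous_kernelDerivIntegrand t y n z).aestronglyMeasurable)
    (integrableOn_kernelDerivIntegrand ht hy n x)
    (continuous_kernelDerivIntegrand t y (n + 1) x).aestronglyMeasurable ?_
    ((integrableOn_pow_mul_exp_neg_mul_pow_four_add_mul (n + 1) ht (|x| + 1)).const_mul 9)
    (.of_forall fun k z _ => hasDerivAt_kernelDerivIntegrand t y n k z)).2.const_mul _
  filter_upwards [ae_restrict_mem measurableSet_Ioi] with k hk z hz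
  exact abs_kernelDerivIntegrand_le hy t (n + 1) (by positivity) (hball z hz) hk

lemma iteratedDeriv_kernelDeriv {t : ℝ} (ht : 0 < t) {y : ℝ} (hy : 0 ≤ y) (m n : ℕ) :
    iteratedDeriv m (kernelDeriv t y n) = kernelDeriv t y (n + m) := by
  induction m generalizing n with
  | zero => rfl
  | succ m ih =>
    rw [iteratedDeriv_succ', funext fun x => (hasDerivAt_kernelDeriv ht hy n x).deriv, ih,
      add_right_comm, add_assoc]

lemma abs_kernelDeriv_le {t : ℝ} (ht : 0 < t) {x y : ℝ} (hx : 0 ≤ x) (hy : 0 ≤ y) (m : ℕ) :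
    |kernelDeriv t y m x| ≤ 9 / (4 * π) * Gamma ((m + 1) / 4) * t ^ (-((m : ℝ) + 1) / 4) := by
  have hbound : ∀ᵐ k ∂volume.restrict (Ioi 0),
      ‖kernelDerivIntegrand t y m x k‖ ≤ 9 * (k ^ m * exp (-t * k ^ 4)) := by
    filter_upwards [ae_restrict_mem measurableSet_Ioi] with k hk
    simpa using abs_kernelDerivIntegrand_le hy t m le_rfl (by rwa [neg_zero]) hk
  rw [kernelDeriv, abs_mul, abs_of_pos (by positivity)]
  calc 1 / π * |∫ k in Ioi 0, kernelDerivIntegrand t y m x k|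
      ≤ 1 / π * ∫ k in Ioi 0, 9 * (k ^ m * exp (-t * k ^ 4)) := by
        gcongr
        exact norm_integral_le_of_norm_le
          ((integrableOn_pow_mul_exp_neg_mul_pow_four m ht).const_mul 9) hbound
    _ = 9 / (4 * π) * Gamma ((m + 1) / 4) * t ^ (-((m : ℝ) + 1) / 4) := by
        rw [integral_const_mul, integral_pow_mul_exp_neg_mul_pow_four m ht]
        ring

/-- uniform pointwise bounds `|∂ₓᵐ K(t,x,y)| ≤ C'ₘ t^{-(m+1)/4}`
for all `t > 0` and `x, y ≥ 0`. -/
theorem stmt7 (m : ℕ) :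
    ∃ C > (0:ℝ), ∀ t > (0:ℝ), ∀ x ≥ (0:ℝ), ∀ y ≥ (0:ℝ),
      |iteratedDeriv m (fun z => K t z y) x| ≤ C * t ^ (-((m : ℝ) + 1) / 4) := by
  have hGamma : 0 < Gamma (((m : ℝ) + 1) / 4) := Gamma_pos_of_pos (by positivity)
  refine ⟨9 / (4 * π) * Gamma ((m + 1) / 4), by positivity, fun t ht x hx y hy => ?_⟩
  rw [← kernelDeriv_zero, iteratedDeriv_kernelDeriv ht hy, zero_add]
  exact abs_kernelDeriv_le ht hx hy m
end
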